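/- Characterization of abstractions of type ♯𝔹→♯𝔹: a closed λ-abstraction λx.t⃗ belongs to ⟦♯𝔹→♯𝔹⟧ if and only if there exist value distributions v⃗₁, v⃗₂ ∈ ⟦♯𝔹⟧ such that t⃗[x:=tt] ≻≻ v⃗₁, t⃗[x:=ff] ≻≻ v⃗₂ and ⟨v⃗₁|v⃗₂⟩ = 0. -/

import Mathlib

namespace LinAlg

/-! ### Syntax: pure values, pure terms, term distributions -/

mutual
inductive Val : Type where
  | var : ℕ → Val
  | lam : ℕ → Distr → Val
  | star : Val
  | pair : Val → Val → Val
  | inl : Val → Val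
  | inr : Val → Val
inductive Term : Type where
  | val : Val → Term
  | app : Term → Term → Term
  | seq : Term → Distr → Term
  | letp : ℕ → ℕ → Term → Distr → Term
  | matc : Term → ℕ → Distr → ℕ → Distr → Term
inductive Distr : Type where
  | zero : Distr
  | single : Term → Distr
  | add : Distr → Distr → Distr
  | smul : ℂ → Distr → Distr
end

noncomputable instance : DecidableEq Val := fun _ _ => Classical.dec _
noncomputable instance : DecidableEq Term := fun _ _ => Classical.dec _
noncomputable instance : DecidableEq Distr := fun _ _ => Classical.dec _

/-! ### The shallow congruence ≡ on term distributions -/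

inductive Cong : Distr → Distr → Prop where
  | addZero (d : Distr) : Cong (d.add .zero) d
  | oneSmul (d : Distr) : Cong (Distr.smul 1 d) d
  | smulSmul (a b : ℂ) (d : Distr) : Cong (Distr.smul a (Distr.smul b d)) (Distr.smul (a * b) d)
  | addComm (d₁ d₂ : Distr) : Cong (d₁.add d₂) (d₂.add d₁)
  | addAssoc (d₁ d₂ d₃ : Distr) : Cong ((d₁.add d₂).add d₃) (d₁.add (d₂.add d₃))
  | smulDistrib (a b : ℂ) (d : Distr) : Cong (Distr.smul (a + b) d) ((Distr.smul a d).add (Distr.smul b d))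
  | smulAdd (a : ℂ) (d₁ d₂ : Distr) : Cong (Distr.smul a (d₁.add d₂)) ((Distr.smul a d₁).add (Distr.smul a d₂))
  | refl (d : Distr) : Cong d d
  | symm {d₁ d₂ : Distr} : Cong d₁ d₂ → Cong d₂ d₁
  | trans {d₁ d₂ d₃ : Distr} : Cong d₁ d₂ → Cong d₂ d₃ → Cong d₁ d₃
  | addCongr {d₁ d₁' d₂ d₂' : Distr} : Cong d₁ d₁' → Cong d₂ d₂' → Cong (d₁.add d₂) (d₁'.add d₂')
  | smulCongr (a : ℂ) {d d' : Distr} : Cong d d' → Cong (Distr.smul a d) (Distr.smul a d')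

/-! ### Free variables -/

mutual
def fvV : Val → Finset ℕ
  | .var y => {y}
  | .lam y b => fvD b \ {y}
  | .star => ∅
  | .pair v₁ v₂ => fvV v₁ ∪ fvV v₂
  | .inl v => fvV v
  | .inr v => fvV v
def fvT : Term → Finset ℕ
  | .val v => fvV v
  | .app s t => fvT s ∪ fvT t
  | .seq t s => fvT t ∪ fvD s
  | .letp y z t s => fvT t ∪ (fvD s \ {y, z})
  | .matc t y s₁ z s₂ => fvT t ∪ (fvD s₁ \ {y}) ∪ (fvD s₂ \ {z})
def fvD : Distr → Finset ℕ
  | .zero => ∅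
  | .single t => fvT t
  | .add d₁ d₂ => fvD d₁ ∪ fvD d₂
  | .smul _ d => fvD d
end

/-! ### Pure substitution -/

mutual
def substV (x : ℕ) (w : Val) : Val → Val
  | .var y => if y = x then w else .var y
  | .lam y b => if y = x then .lam y b else .lam y (substD x w b)
  | .star => .star
  | .pair v₁ v₂ => .pair (substV x w v₁) (substV x w v₂)
  | .inl v => .inl (substV x w v)
  | .inr v => .inr (substV x w v)
def substT (x : ℕ) (w : Val) : Term → Term
  | .val v => .val (substV x w v)
  | .app s t => .app (substT x w s) (substT x w t)
  | .seq t s => .seq (substT x w t) (substD x w s)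
  | .letp y z t s =>
      .letp y z (substT x w t) (if y = x ∨ z = x then s else substD x w s)
  | .matc t y s₁ z s₂ =>
      .matc (substT x w t) y (if y = x then s₁ else substD x w s₁)
        z (if z = x then s₂ else substD x w s₂)
def substD (x : ℕ) (w : Val) : Distr → Distr
  | .zero => .zero
  | .single t => .single (substT x w t)
  | .add d₁ d₂ => .add (substD x w d₁) (substD x w d₂)
  | .smul a d => .smul a (substD x w d)
end

/-! ### Linear extensions of the syntactic constructs -/

def appTD (s : Term) : Distr → Distr
  | .zero => .zero
  | .single t => .single (.app s t)
  | .add d₁ d₂ => .add (appTD s d₁) (appTD s d₂)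
  | .smul a d => .smul a (appTD s d)

def appDV : Distr → Val → Distr
  | .zero, _ => .zero
  | .single t, v => .single (.app t (.val v))
  | .add d₁ d₂, v => .add (appDV d₁ v) (appDV d₂ v)
  | .smul a d, v => .smul a (appDV d v)

def seqD : Distr → Distr → Distr
  | .zero, _ => .zero
  | .single t, s => .single (.seq t s)
  | .add d₁ d₂, s => .add (seqD d₁ s) (seqD d₂ s)
  | .smul a d, s => .smul a (seqD d s)

def letpD (x y : ℕ) : Distr → Distr → Distr
  | .zero, _ => .zero
  | .single t, s => .single (.letp x y t s)
  | .add d₁ d₂, s => .add (letpD x y d₁ s) (letpD x y d₂ s)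
  | .smul a d, s => .smul a (letpD x y d s)

def matcD : Distr → ℕ → Distr → ℕ → Distr → Distr
  | .zero, _, _, _, _ => .zero
  | .single t, y, s₁, z, s₂ => .single (.matc t y s₁ z s₂)
  | .add d₁ d₂, y, s₁, z, s₂ => .add (matcD d₁ y s₁ z s₂) (matcD d₂ y s₁ z s₂)
  | .smul a d, y, s₁, z, s₂ => .smul a (matcD d y s₁ z s₂)

/-- Bilinear application of distributions:  (Σᵢ αᵢ·tᵢ)(Σⱼ βⱼ·sⱼ) = Σᵢⱼ αᵢβⱼ·(tᵢ sⱼ). -/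
def appD : Distr → Distr → Distr
  | .zero, _ => .zero
  | .single t, w => appTD t w
  | .add d₁ d₂, w => .add (appD d₁ w) (appD d₂ w)
  | .smul a d, w => .smul a (appD d w)

/-- Bilinear substitution  d⟨x := w⃗⟩ = Σⱼ βⱼ · d[x := wⱼ]  (recursion on the value
distribution w⃗; non-value summands are junk and are sent to 0⃗). -/
def bsubst (x : ℕ) (d : Distr) : Distr → Distr
  | .zero => .zero
  | .single (.val w) => substD x w d
  | .single _ => .zero
  | .add w₁ w₂ => .add (bsubst x d w₁) (bsubst x d w₂)
  | .smul a w => .smul a (bsubst x d w)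

/-! ### Evaluation -/

inductive Atom : Term → Distr → Prop where
  | beta (x : ℕ) (b : Distr) (v : Val) :
      Atom (.app (.val (.lam x b)) (.val v)) (substD x v b)
  | seqStar (s : Distr) : Atom (.seq (.val .star) s) s
  | letPair (x y : ℕ) (v w : Val) (s : Distr) :
      Atom (.letp x y (.val (.pair v w)) s) (substD y w (substD x v s))
  | matchInl (v : Val) (y : ℕ) (s₁ : Distr) (z : ℕ) (s₂ : Distr) :
      Atom (.matc (.val (.inl v)) y s₁ z s₂) (substD y v s₁)
  | matchInr (v : Val) (y : ℕ) (s₁ : Distr) (z : ℕ) (s₂ : Distr) :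
      Atom (.matc (.val (.inr v)) y s₁ z s₂) (substD z v s₂)
  | appR (s : Term) {t : Term} {d : Distr} : Atom t d → Atom (.app s t) (appTD s d)
  | appL (v : Val) {t : Term} {d : Distr} : Atom t d → Atom (.app t (.val v)) (appDV d v)
  | seqC (s : Distr) {t : Term} {d : Distr} : Atom t d → Atom (.seq t s) (seqD d s)
  | letC (x y : ℕ) (s : Distr) {t : Term} {d : Distr} :
      Atom t d → Atom (.letp x y t s) (letpD x y d s)
  | matcC (y : ℕ) (s₁ : Distr) (z : ℕ) (s₂ : Distr) {t : Term} {d : Distr} :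
      Atom t d → Atom (.matc t y s₁ z s₂) (matcD d y s₁ z s₂)

/-- One-step evaluation:  t⃗ ≻ t⃗′. -/
def Step (d d' : Distr) : Prop :=
  ∃ (a : ℂ) (s : Term) (s' r : Distr),
    Cong d (Distr.add (.smul a (.single s)) r) ∧
    Cong d' (Distr.add (.smul a s') r) ∧ Atom s s'

/-- Evaluation  t⃗ ≻≻ t⃗′:  reflexive-transitive closure of one-step evaluation. -/
def Eval : Distr → Distr → Prop := Relation.ReflTransGen Step

/-! ### Value distributions, inner product, norm -/

def IsValT : Term → Prop
  | .val _ => True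
  | _ => False

def IsValD : Distr → Prop
  | .zero => True
  | .single t => IsValT t
  | .add d₁ d₂ => IsValD d₁ ∧ IsValD d₂
  | .smul _ d => IsValD d

/-- The set of closed value distributions. -/
def ClosedValD : Set Distr := {d | IsValD d ∧ fvD d = ∅}

/-- Total coefficient of the pure term `t` in the distribution `d`. -/
noncomputable def coeff : Distr → Term → ℂ
  | .zero, _ => 0
  | .single s, t => if s = t then 1 else 0
  | .add d₁ d₂, t => coeff d₁ t + coeff d₂ t
  | .smul a d, t => a * coeff d t

/-- The domain of a distribution (all pure terms occurring in it, even with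
coefficient 0). -/
noncomputable def domD : Distr → Finset Term
  | .zero => ∅
  | .single t => {t}
  | .add d₁ d₂ => domD d₁ ∪ domD d₂
  | .smul _ d => domD d

/-- The inner product ⟨v⃗|w⃗⟩ on value distributions. -/
noncomputable def innerD (v w : Distr) : ℂ :=
  ∑ t ∈ domD v, (starRingEnd ℂ) (coeff v t) * coeff w t

/-- The pseudo-ℓ²-norm ‖v⃗‖. -/
noncomputable def normD (v : Distr) : ℝ := Real.sqrt (innerD v v).re

/-- The unit sphere S of closed value distributions of norm 1. -/
def Sphere : Set Distr := {d | d ∈ ClosedValD ∧ normD d = 1}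

/-- Span(X): weak linear combinations of elements of X (taken modulo ≡). -/
inductive Span (X : Set Distr) : Distr → Prop where
  | mem {d : Distr} : d ∈ X → Span X d
  | zero : Span X .zero
  | add {d₁ d₂ : Distr} : Span X d₁ → Span X d₂ → Span X (d₁.add d₂)
  | smul (a : ℂ) {d : Distr} : Span X d → Span X (Distr.smul a d)
  | congr {d d' : Distr} : Span X d → Cong d d' → Span X d'

/-! ### Realizability: unitary types -/

/-- t⃗ ⊩ A :  t⃗ evaluates to some vector of ⟦A⟧. -/
def Realizes (A : Set Distr) (t : Distr) : Prop := ∃ v ∈ A, Eval t v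

/-- |A| : the set of (closed) realizers of A. -/
def realizersOf (A : Set Distr) : Set Distr := {t | fvD t = ∅ ∧ Realizes A t}

/-! ### Type constructors -/

def UnitT : Set Distr := {Distr.single (.val .star)}

/-- ♭A : the basis of A. -/
def flatT (X : Set Distr) : Set Distr :=
  {e | ∃ d ∈ X, ∃ v : Val, (Term.val v) ∈ domD d ∧ e = Distr.single (.val v)}

/-- ♯A : the unitary span of A. -/
def sharpT (X : Set Distr) : Set Distr := {d | Span X d ∧ d ∈ Sphere}

/-- Linear extension of a value constructor. -/
def mapVD (f : Val → Val) : Distr → Distr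
  | .zero => .zero
  | .single (.val v) => .single (.val (f v))
  | .single t => .single t
  | .add d₁ d₂ => .add (mapVD f d₁) (mapVD f d₂)
  | .smul a d => .smul a (mapVD f d)

def inlD : Distr → Distr := mapVD Val.inl
def inrD : Distr → Distr := mapVD Val.inr

/-- Bilinear extension of pairing. -/
def pairD : Distr → Distr → Distr
  | .zero, _ => .zero
  | .single (.val v), w => mapVD (Val.pair v) w
  | .single t, _ => .single t
  | .add d₁ d₂, w => .add (pairD d₁ w) (pairD d₂ w)
  | .smul a d, w => .smul a (pairD d w)

/-- A + B (simple sum). -/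
def plusT (A B : Set Distr) : Set Distr :=
  {d | (∃ v ∈ A, d = inlD v) ∨ (∃ w ∈ B, d = inrD w)}

/-- A × B (simple product). -/
def timesT (A B : Set Distr) : Set Distr :=
  {d | ∃ v ∈ A, ∃ w ∈ B, d = pairD v w}

/-- A → B (pure arrow). -/
def arrowT (A B : Set Distr) : Set Distr :=
  {d | ∃ (x : ℕ) (b : Distr), d = Distr.single (.val (.lam x b)) ∧ fvD d = ∅ ∧
      ∀ v ∈ A, Realizes B (bsubst x b v)}

/-- Σᵢ αᵢ · λx.t⃗ᵢ  ↦  Σᵢ αᵢ · t⃗ᵢ  (strips the λx in front of each summand). -/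
def stripLam (x : ℕ) : Distr → Distr
  | .zero => .zero
  | .single (.val (.lam y b)) => if y = x then b else .single (.val (.lam y b))
  | .single t => .single t
  | .add d₁ d₂ => .add (stripLam x d₁) (stripLam x d₂)
  | .smul a d => .smul a (stripLam x d)

/-- A ⇒ B (unitary arrow). -/
def uarrowT (A B : Set Distr) : Set Distr :=
  {d | d ∈ Sphere ∧ ∃ x : ℕ,
      (∀ t ∈ domD d, ∃ b : Distr, t = Term.val (.lam x b)) ∧
      ∀ v ∈ A, Realizes B (bsubst x (stripLam x d) v)}

/-! ### Booleans -/

def ttD : Distr := .single (.val (.inl .star))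
def ffD : Distr := .single (.val (.inr .star))

/-- 𝔹 = 𝕌 + 𝕌. -/
def BoolT : Set Distr := plusT UnitT UnitT

/-- ♯𝔹, the type of unitary Booleans. -/
def sharpBool : Set Distr := sharpT BoolT

/-- Boolean projection π : Span({tt,ff}) → ℂ². -/
noncomputable def piB (d : Distr) : ℂ × ℂ :=
  (coeff d (.val (.inl .star)), coeff d (.val (.inr .star)))

/-- t⃗ represents the operator F : ℂ² → ℂ². -/
def Represents (td : Distr) (F : ℂ × ℂ → ℂ × ℂ) : Prop :=
  ∀ v, Span BoolT v → ∃ w, Span BoolT w ∧ Eval (appD td v) w ∧ piB w = F (piB v)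

/-- Hermitian inner product on ℂ². -/
def hinner (u v : ℂ × ℂ) : ℂ :=
  (starRingEnd ℂ) u.1 * v.1 + (starRingEnd ℂ) u.2 * v.2

/-- A unitary operator on ℂ². -/
def IsUnitaryOp (F : ℂ × ℂ → ℂ × ℂ) : Prop :=
  ∀ u v : ℂ × ℂ, hinner (F u) (F v) = hinner u v

/-! ### Typing contexts, substitutions, judgments -/

abbrev Ctx := List (ℕ × Set Distr)
abbrev Subst := List (ℕ × Distr)

/-- Applying a substitution, one bilinear substitution at a time. -/
def applySub : Distr → Subst → Distr
  | d, [] => d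
  | d, (x, w) :: σ => applySub (bsubst x d w) σ

/-- σ ∈ ⟦Γ⟧. -/
def SubMem (σ : Subst) (Γ : Ctx) : Prop :=
  List.Forall₂ (fun p q => p.1 = q.1 ∧ p.2 ∈ q.2) σ Γ

def ctxDom (Γ : Ctx) : Set ℕ := {x | ∃ A, (x, A) ∈ Γ}

/-- dom♯(Γ): the variables of Γ whose type is not a pure-value type. -/
def ctxDomSharp (Γ : Ctx) : Set ℕ := {x | ∃ A, (x, A) ∈ Γ ∧ flatT A ≠ A}

/-- All the types of the context are unitary types (subsets of the sphere). -/
def CtxUnitary (Γ : Ctx) : Prop := ∀ p ∈ Γ, p.2 ⊆ Sphere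

/-- Validity of the typing judgment  Γ ⊢ t⃗ : A. -/
def ValidJ (Γ : Ctx) (t : Distr) (A : Set Distr) : Prop :=
  ctxDomSharp Γ ⊆ (fvD t : Set ℕ) ∧ (fvD t : Set ℕ) ⊆ ctxDom Γ ∧
  ∀ σ : Subst, SubMem σ Γ → Realizes A (applySub t σ)

/-- Validity of the orthogonality judgment  Γ | Δ₁ ⊢ t⃗₁ ⊥ Δ₂ ⊢ t⃗₂ : A. -/
def OrthoJ (Γ Δ₁ Δ₂ : Ctx) (t₁ t₂ : Distr) (A : Set Distr) : Prop :=
  ValidJ (Γ ++ Δ₁) t₁ A ∧ ValidJ (Γ ++ Δ₂) t₂ A ∧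
  ∀ σ σ₁ σ₂ : Subst, SubMem σ Γ → SubMem σ₁ Δ₁ → SubMem σ₂ Δ₂ →
    ∀ v₁ v₂ : Distr, v₁ ∈ ClosedValD → v₂ ∈ ClosedValD →
      Eval (applySub t₁ (σ ++ σ₁)) v₁ → Eval (applySub t₂ (σ ++ σ₂)) v₂ →
      innerD v₁ v₂ = 0

end LinAlg

namespace LinAlg

/-! Evaluation of pure terms is deterministic, so the coefficients of a value distribution
reached from `t⃗` are determined by `t⃗` alone. Since `≻` acts summand by summand modulo `≡`,
`t⃗⟨x := α·tt + β·ff⟩` then evaluates to a distribution with the coefficients of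
`α·v⃗₁ + β·v⃗₂`, whose squared norm is `|α|² + |β|² + 2 Re (ᾱ β ⟨v⃗₁|v⃗₂⟩)`. Hence `λx.t⃗` maps
every unit Boolean to a unit vector iff `Re (ᾱ β ⟨v⃗₁|v⃗₂⟩) = 0` for all unit `(α, β)`, and the
two choices `(1, 1)/√2` and `(1, i)/√2` force `⟨v⃗₁|v⃗₂⟩ = 0`. -/

open ComplexConjugate

def linExt (h : Term → ℂ) : Distr → ℂ
  | .zero => 0
  | .single t => h t
  | .add d₁ d₂ => linExt h d₁ + linExt h d₂
  | .smul a d => a * linExt h d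

theorem linExt_congr {h h' : Term → ℂ} : ∀ {d : Distr},
    (∀ t ∈ domD d, h t = h' t) → linExt h d = linExt h' d
  | .zero, _ => rfl
  | .single t, hh => hh t (by simp [domD])
  | .add d₁ d₂, hh => by
      rw [linExt, linExt, linExt_congr fun t ht => hh t (by simp [domD, ht]),
        linExt_congr fun t ht => hh t (by simp [domD, ht])]
  | .smul a d, hh => by
      rw [linExt, linExt, linExt_congr fun t ht => hh t (by simp [domD, ht])]

theorem coeff_eq_linExt (u : Term) : ∀ d : Distr,
    coeff d u = linExt (fun t => if t = u then 1 else 0) d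
  | .zero => rfl
  | .single _ => rfl
  | .add d₁ d₂ => by rw [coeff, linExt, coeff_eq_linExt u d₁, coeff_eq_linExt u d₂]
  | .smul a d => by rw [coeff, linExt, coeff_eq_linExt u d]

theorem coeff_eq_zero_of_notMem_domD {t : Term} : ∀ {d : Distr}, t ∉ domD d → coeff d t = 0
  | .zero, _ => rfl
  | .single s, h => by
      rw [domD, Finset.mem_singleton] at h
      simp [coeff, Ne.symm h]
  | .add d₁ d₂, h => by
      simp only [domD, Finset.mem_union, not_or] at h
      rw [coeff, coeff_eq_zero_of_notMem_domD h.1, coeff_eq_zero_of_notMem_domD h.2, add_zero]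
  | .smul a d, h => by rw [coeff, coeff_eq_zero_of_notMem_domD (d := d) h, mul_zero]

theorem isValD_iff_forall_mem_domD : ∀ {d : Distr},
    IsValD d ↔ ∀ t ∈ domD d, ∃ v : Val, t = .val v
  | .zero => by simp [IsValD, domD]
  | .single (.val _) => by simp [IsValD, IsValT, domD]
  | .single (.app _ _) | .single (.seq _ _) | .single (.letp _ _ _ _)
  | .single (.matc _ _ _ _ _) => by simp [IsValD, IsValT, domD]
  | .add d₁ d₂ => by
      simp only [IsValD, domD, Finset.mem_union, or_imp, forall_and,
        isValD_iff_forall_mem_domD (d := d₁), isValD_iff_forall_mem_domD (d := d₂)]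
  | .smul _ d => isValD_iff_forall_mem_domD (d := d)

namespace Cong

variable {d d' : Distr}

theorem linExt_eq (hc : Cong d d') (h : Term → ℂ) : linExt h d = linExt h d' := by
  induction hc <;> simp [linExt, *] <;> ring

theorem coeff_eq (hc : Cong d d') (u : Term) : coeff d u = coeff d' u := by
  rw [coeff_eq_linExt, coeff_eq_linExt, hc.linExt_eq]

theorem domD_eq (hc : Cong d d') : domD d = domD d' := by
  induction hc with
  | addComm => exact Finset.union_comm _ _
  | _ => simp [domD, Finset.union_assoc, *]

theorem fvD_eq (hc : Cong d d') : fvD d = fvD d' := by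
  induction hc with
  | addComm => exact Finset.union_comm _ _
  | _ => simp [fvD, Finset.union_assoc, *]

theorem mem_closedValD_iff (hc : Cong d d') : d ∈ ClosedValD ↔ d' ∈ ClosedValD := by
  show IsValD d ∧ fvD d = ∅ ↔ IsValD d' ∧ fvD d' = ∅
  rw [isValD_iff_forall_mem_domD, isValD_iff_forall_mem_domD, hc.domD_eq, hc.fvD_eq]

theorem bsubst (x : ℕ) (b : Distr) (hc : Cong d d') :
    Cong (LinAlg.bsubst x b d) (LinAlg.bsubst x b d') := by
  induction hc with
  | symm _ ih => exact ih.symm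
  | trans _ _ ih₁ ih₂ => exact ih₁.trans ih₂
  | addCongr _ _ ih₁ ih₂ => exact ih₁.addCongr ih₂
  | smulCongr a _ ih => exact ih.smulCongr a
  | _ => constructor

end Cong

theorem innerD_eq_sum_of_subset {v w : Distr} {S : Finset Term} (h : domD v ⊆ S) :
    innerD v w = ∑ t ∈ S, conj (coeff v t) * coeff w t :=
  Finset.sum_subset h fun t _ ht => by rw [coeff_eq_zero_of_notMem_domD ht, map_zero, zero_mul]

theorem innerD_congr_coeff {v v' w w' : Distr}
    (hv : ∀ u, coeff v u = coeff v' u) (hw : ∀ u, coeff w u = coeff w' u) :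
    innerD v w = innerD v' w' := by
  rw [innerD_eq_sum_of_subset (S := domD v ∪ domD v') Finset.subset_union_left,
    innerD_eq_sum_of_subset (S := domD v ∪ domD v') Finset.subset_union_right]
  exact Finset.sum_congr rfl fun t _ => by rw [hv, hw]

theorem innerD_conj_symm (v w : Distr) : conj (innerD w v) = innerD v w := by
  rw [innerD_eq_sum_of_subset (v := w) (S := domD v ∪ domD w) Finset.subset_union_right,
    innerD_eq_sum_of_subset (v := v) (S := domD v ∪ domD w) Finset.subset_union_left, map_sum]
  exact Finset.sum_congr rfl fun t _ => by rw [map_mul, starRingEnd_self_apply, mul_comm]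

theorem innerD_smul_left (a : ℂ) (v w : Distr) :
    innerD (.smul a v) w = conj a * innerD v w := by
  simp only [innerD, domD, coeff, Finset.mul_sum, map_mul, mul_assoc]

theorem innerD_smul_right (a : ℂ) (v w : Distr) :
    innerD v (.smul a w) = a * innerD v w := by
  simp only [innerD, coeff, Finset.mul_sum, mul_left_comm]

theorem innerD_add_left (v₁ v₂ w : Distr) :
    innerD (v₁.add v₂) w = innerD v₁ w + innerD v₂ w := by
  rw [innerD_eq_sum_of_subset (v := v₁) (S := domD v₁ ∪ domD v₂) Finset.subset_union_left,
    innerD_eq_sum_of_subset (v := v₂) (S := domD v₁ ∪ domD v₂) Finset.subset_union_right,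
    innerD, domD, ← Finset.sum_add_distrib]
  simp only [coeff, map_add, add_mul]

theorem innerD_add_right (v w₁ w₂ : Distr) :
    innerD v (w₁.add w₂) = innerD v w₁ + innerD v w₂ := by
  simp only [innerD, coeff, mul_add, Finset.sum_add_distrib]

theorem innerD_lincomb_self (α β : ℂ) (v₁ v₂ : Distr) :
    innerD ((Distr.smul α v₁).add (.smul β v₂)) ((Distr.smul α v₁).add (.smul β v₂)) =
      conj α * α * innerD v₁ v₁ + conj β * β * innerD v₂ v₂ +
        (conj α * β * innerD v₁ v₂ + conj (conj α * β * innerD v₁ v₂)) := by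
  simp only [innerD_add_left, innerD_add_right, innerD_smul_left, innerD_smul_right, map_mul,
    starRingEnd_self_apply, innerD_conj_symm]
  ring

theorem normD_eq_one_iff {v : Distr} : normD v = 1 ↔ innerD v v = 1 := by
  have hreal : innerD v v = ((∑ t ∈ domD v, Complex.normSq (coeff v t) : ℝ) : ℂ) := by
    rw [innerD, Complex.ofReal_sum]
    exact Finset.sum_congr rfl fun t _ => Complex.normSq_eq_conj_mul_self.symm
  rw [normD, hreal, Complex.ofReal_re, Real.sqrt_eq_one, ← Complex.ofReal_one,
    Complex.ofReal_inj]

theorem Step.of_cong {d d' e : Distr} (hc : Cong d' d) (h : Step d e) : Step d' e := by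
  obtain ⟨a, s, s', r, h₁, h₂, h₃⟩ := h
  exact ⟨a, s, s', r, hc.trans h₁, h₂, h₃⟩

theorem Step.add_left {d d' : Distr} (e : Distr) (h : Step d d') :
    Step (d.add e) (d'.add e) := by
  obtain ⟨a, s, s', r, h₁, h₂, h₃⟩ := h
  exact ⟨a, s, s', r.add e, (h₁.addCongr (.refl e)).trans (.addAssoc _ _ _),
    (h₂.addCongr (.refl e)).trans (.addAssoc _ _ _), h₃⟩

theorem Step.add_right {d d' : Distr} (e : Distr) (h : Step d d') :
    Step (e.add d) (e.add d') := by
  obtain ⟨a, s, s', r, h₁, h₂, h₃⟩ := h.add_left e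
  exact ⟨a, s, s', r, (Cong.addComm e d).trans h₁, (Cong.addComm e d').trans h₂, h₃⟩

theorem Step.smul {d d' : Distr} (c : ℂ) (h : Step d d') :
    Step (.smul c d) (.smul c d') := by
  obtain ⟨a, s, s', r, h₁, h₂, h₃⟩ := h
  exact ⟨c * a, s, s', .smul c r,
    (h₁.smulCongr c).trans ((Cong.smulAdd c _ _).trans ((Cong.smulSmul c a _).addCongr (.refl _))),
    (h₂.smulCongr c).trans ((Cong.smulAdd c _ _).trans ((Cong.smulSmul c a _).addCongr (.refl _))),
    h₃⟩

theorem Eval.add {d d' e e' : Distr} (h : Eval d d') (h' : Eval e e') :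
    Eval (d.add e) (d'.add e') :=
  Relation.ReflTransGen.trans (r := Step)
    (Relation.ReflTransGen.lift (·.add e) (fun _ _ => Step.add_left e) _ _ h)
    (Relation.ReflTransGen.lift d'.add (fun _ _ => Step.add_right d') _ _ h')

theorem Eval.smul {d d' : Distr} (c : ℂ) (h : Eval d d') : Eval (.smul c d) (.smul c d') :=
  Relation.ReflTransGen.lift (Distr.smul c) (fun _ _ => Step.smul c) _ _ h

/-- A zero-step evaluation pins the syntax, so `≡` on the left is absorbed only up to `≡` on
the right. -/
theorem Eval.exists_of_cong {d d' w : Distr} (hc : Cong d d') (h : Eval d w) :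
    ∃ w', Eval d' w' ∧ Cong w w' := by
  rcases h.cases_head with rfl | ⟨e, hstep, hrest⟩
  · exact ⟨d', .refl, hc⟩
  · exact ⟨w, .head (hstep.of_cong hc.symm) hrest, .refl w⟩

theorem Atom.not_val {v : Val} {d : Distr} (h : Atom (.val v) d) : False := nomatch h

theorem Atom.det {s : Term} {d d' : Distr} (h : Atom s d) (h' : Atom s d') : d = d' := by
  induction h generalizing d' <;> cases h' <;> first
    | rfl
    | (exfalso; exact Atom.not_val ‹_›)
    | rename_i ih _ h; rw [ih h]

/-- `HasNF s f`: atomic evaluation takes `s` to a value distribution with coefficients `f`. -/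
inductive HasNF : Term → (Term → ℂ) → Prop where
  | val (v : Val) : HasNF (.val v) fun u => if .val v = u then 1 else 0
  | step {s : Term} {d : Distr} (g : Term → Term → ℂ) :
      Atom s d → (∀ t ∈ domD d, HasNF t (g t)) → HasNF s fun u => linExt (fun t => g t u) d

theorem HasNF.det {s : Term} {f f' : Term → ℂ} (h : HasNF s f) (h' : HasNF s f') : f = f' := by
  induction h generalizing f' with
  | val => cases h' with
    | val => rfl
    | step _ hA _ => exact hA.not_val.elim
  | step g hA _ ih => cases h' with
    | val => exact hA.not_val.elim
    | step g' hA' hg' =>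
      cases hA.det hA'
      funext u
      exact linExt_congr fun t ht => congrFun (ih t ht (hg' t ht)) u

open Classical in
noncomputable def nfCoeff (s : Term) : Term → ℂ :=
  if h : ∃ f, HasNF s f then h.choose else 0

theorem nfCoeff_eq {s : Term} {f : Term → ℂ} (h : HasNF s f) : nfCoeff s = f := by
  have hex : ∃ f, HasNF s f := ⟨f, h⟩
  rw [nfCoeff, dif_pos hex]
  exact hex.choose_spec.det h

theorem Step.linExt_nfCoeff_eq {d d' : Distr} (h : Step d d')
    (hnf : ∀ t ∈ domD d', ∃ f, HasNF t f) :
    (∀ t ∈ domD d, ∃ f, HasNF t f) ∧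
      ∀ u, linExt (nfCoeff · u) d = linExt (nfCoeff · u) d' := by
  obtain ⟨a, s, s', r, h₁, h₂, h₃⟩ := h
  rw [h₁.domD_eq, domD, domD, domD]
  rw [h₂.domD_eq, domD, domD] at hnf
  have hs : HasNF s fun u => linExt (nfCoeff · u) s' :=
    .step nfCoeff h₃ fun t ht => by
      obtain ⟨f, hf⟩ := hnf t (Finset.mem_union_left _ ht)
      rwa [nfCoeff_eq hf]
  refine ⟨fun t ht => ?_, fun u => ?_⟩
  · rcases Finset.mem_union.mp ht with ht | ht
    · exact ⟨_, Finset.mem_singleton.mp ht ▸ hs⟩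
    · exact hnf t (Finset.mem_union_right _ ht)
  · rw [h₁.linExt_eq, h₂.linExt_eq]
    simp only [linExt, nfCoeff_eq hs]

theorem Eval.linExt_nfCoeff_eq {d v : Distr} (h : Eval d v) (hv : IsValD v) :
    (∀ t ∈ domD d, ∃ f, HasNF t f) ∧ ∀ u, linExt (nfCoeff · u) d = coeff v u := by
  induction h using Relation.ReflTransGen.head_induction_on with
  | refl =>
    have hval := isValD_iff_forall_mem_domD.mp hv
    refine ⟨fun t ht => ?_, fun u => ?_⟩
    · obtain ⟨w, rfl⟩ := hval t ht
      exact ⟨_, .val w⟩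
    · rw [coeff_eq_linExt]
      refine linExt_congr fun t ht => ?_
      obtain ⟨w, rfl⟩ := hval t ht
      rw [nfCoeff_eq (.val w)]
  | head hstep _ ih =>
    obtain ⟨hnf, hcoeff⟩ := hstep.linExt_nfCoeff_eq ih.1
    exact ⟨hnf, fun u => (hcoeff u).trans (ih.2 u)⟩

theorem Eval.coeff_unique {d v w : Distr} (hv : Eval d v) (hw : Eval d w)
    (hv' : IsValD v) (hw' : IsValD w) (u : Term) : coeff v u = coeff w u := by
  rw [← (hv.linExt_nfCoeff_eq hv').2, (hw.linExt_nfCoeff_eq hw').2]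

theorem domD_subset_of_spanBool {v : Distr} (h : Span BoolT v) :
    domD v ⊆ {.val (.inl .star), .val (.inr .star)} := by
  induction h with
  | mem hm =>
    rcases hm with ⟨u, hu, rfl⟩ | ⟨u, hu, rfl⟩ <;> rw [Set.mem_singleton_iff.mp hu] <;>
      simp [inlD, inrD, mapVD, domD]
  | zero => exact Finset.empty_subset _
  | add _ _ ih₁ ih₂ => exact Finset.union_subset ih₁ ih₂
  | smul _ _ ih => exact ih
  | congr _ hc ih => rwa [← hc.domD_eq]

theorem innerD_self_of_spanBool {v : Distr} (h : Span BoolT v) :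
    innerD v v = hinner (piB v) (piB v) := by
  rw [innerD_eq_sum_of_subset (domD_subset_of_spanBool h), Finset.sum_pair (by simp)]
  rfl

def boolVec (α β : ℂ) : Distr := (Distr.smul α ttD).add (.smul β ffD)

theorem piB_boolVec (α β : ℂ) : piB (boolVec α β) = (α, β) := by
  simp [piB, boolVec, ttD, ffD, coeff]

theorem boolVec_mem_sharpBool {α β : ℂ} (h : hinner (α, β) (α, β) = 1) :
    boolVec α β ∈ sharpBool := by
  have hspan : Span BoolT (boolVec α β) :=
    .add (.smul α (.mem (Or.inl ⟨_, rfl, rfl⟩))) (.smul β (.mem (Or.inr ⟨_, rfl, rfl⟩)))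
  refine ⟨hspan, ⟨?_, ?_⟩, normD_eq_one_iff.mpr ?_⟩
  · simp [boolVec, ttD, ffD, IsValD, IsValT]
  · simp [boolVec, ttD, ffD, fvD, fvT, fvV]
  · rw [innerD_self_of_spanBool hspan, piB_boolVec, h]

theorem ttD_mem_sharpBool : ttD ∈ sharpBool :=
  ⟨.mem (Or.inl ⟨_, rfl, rfl⟩), ⟨trivial, rfl⟩,
    normD_eq_one_iff.mpr (by simp [innerD, ttD, domD, coeff])⟩

theorem ffD_mem_sharpBool : ffD ∈ sharpBool :=
  ⟨.mem (Or.inr ⟨_, rfl, rfl⟩), ⟨trivial, rfl⟩,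
    normD_eq_one_iff.mpr (by simp [innerD, ffD, domD, coeff])⟩

theorem eq_zero_of_forall_hinner_eq_one {z : ℂ}
    (h : ∀ α β : ℂ, hinner (α, β) (α, β) = 1 → conj α * β * z + conj (conj α * β * z) = 0) :
    z = 0 := by
  obtain ⟨c, hconj, hcc⟩ : ∃ c : ℂ, conj c = c ∧ c * c = 1 / 2 := by
    refine ⟨((√2)⁻¹ : ℝ), Complex.conj_ofReal _, ?_⟩
    rw [← Complex.ofReal_mul, ← Real.sqrt_inv, Real.mul_self_sqrt (by norm_num)]
    norm_num
  have hre := h c c (by simp only [hinner, hconj]; linear_combination 2 * hcc)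
  have him := h c (c * .I) (by
    simp only [hinner, map_mul, hconj, Complex.conj_I]
    linear_combination (2 : ℂ) * hcc - c * c * Complex.I_mul_I)
  simp only [map_mul, hconj, Complex.conj_I] at hre him
  linear_combination hre - Complex.I * him + c * c * (z - conj z) * Complex.I_mul_I - 2 * z * hcc

section Abstraction

variable {x : ℕ} {b v₁ v₂ : Distr}

theorem exists_eval_bsubst_of_spanBool (hv₁ : Span BoolT v₁) (hv₂ : Span BoolT v₂)
    (hc₁ : v₁ ∈ ClosedValD) (hc₂ : v₂ ∈ ClosedValD)
    (hE₁ : Eval (substD x (.inl .star) b) v₁) (hE₂ : Eval (substD x (.inr .star) b) v₂)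
    {v : Distr} (hv : Span BoolT v) :
    ∃ w, Eval (bsubst x b v) w ∧ Span BoolT w ∧ w ∈ ClosedValD ∧
      ∀ u, coeff w u = (piB v).1 * coeff v₁ u + (piB v).2 * coeff v₂ u := by
  induction hv with
  | mem hm =>
    rcases hm with ⟨e, he, rfl⟩ | ⟨e, he, rfl⟩ <;> rw [Set.mem_singleton_iff.mp he]
    · exact ⟨v₁, hE₁, hv₁, hc₁, fun u => by simp [piB, inlD, mapVD, coeff]⟩
    · exact ⟨v₂, hE₂, hv₂, hc₂, fun u => by simp [piB, inrD, mapVD, coeff]⟩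
  | zero => exact ⟨.zero, .refl, .zero, ⟨trivial, rfl⟩, fun u => by simp [piB, coeff]⟩
  | add _ _ ih₁ ih₂ =>
    obtain ⟨w₁, hw₁, hs₁, hc₁, hcoeff₁⟩ := ih₁
    obtain ⟨w₂, hw₂, hs₂, hc₂, hcoeff₂⟩ := ih₂
    refine ⟨w₁.add w₂, hw₁.add hw₂, hs₁.add hs₂,
      ⟨⟨hc₁.1, hc₂.1⟩, by simp [fvD, hc₁.2, hc₂.2]⟩, fun u => ?_⟩
    simp only [piB, coeff, hcoeff₁, hcoeff₂]
    ring
  | smul a _ ih =>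
    obtain ⟨w, hw, hs, hc, hcoeff⟩ := ih
    refine ⟨.smul a w, hw.smul a, hs.smul a, hc, fun u => ?_⟩
    simp only [piB, coeff, hcoeff]
    ring
  | congr _ hcong ih =>
    obtain ⟨w, hw, hs, hc, hcoeff⟩ := ih
    obtain ⟨w', hw', hww'⟩ := hw.exists_of_cong (hcong.bsubst x b)
    refine ⟨w', hw', hs.congr hww', hww'.mem_closedValD_iff.mp hc, fun u => ?_⟩
    rw [← hww'.coeff_eq, hcoeff, piB, piB, hcong.coeff_eq, hcong.coeff_eq]

theorem innerD_self_of_coeff_eq {v w : Distr} (hv : Span BoolT v)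
    (h₁ : innerD v₁ v₁ = 1) (h₂ : innerD v₂ v₂ = 1)
    (hw : ∀ u, coeff w u = (piB v).1 * coeff v₁ u + (piB v).2 * coeff v₂ u) :
    innerD w w = innerD v v + (conj (piB v).1 * (piB v).2 * innerD v₁ v₂ +
      conj (conj (piB v).1 * (piB v).2 * innerD v₁ v₂)) := by
  have hw' : ∀ u, coeff w u = coeff ((Distr.smul (piB v).1 v₁).add (.smul (piB v).2 v₂)) u := hw
  rw [innerD_congr_coeff hw' hw', innerD_lincomb_self, h₁, h₂, innerD_self_of_spanBool hv, hinner]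
  ring

theorem mem_arrowT_of_innerD_eq_zero (hclosed : fvD (.single (.val (.lam x b))) = ∅)
    (hv₁ : v₁ ∈ sharpBool) (hv₂ : v₂ ∈ sharpBool)
    (hE₁ : Eval (substD x (.inl .star) b) v₁) (hE₂ : Eval (substD x (.inr .star) b) v₂)
    (horth : innerD v₁ v₂ = 0) :
    Distr.single (.val (.lam x b)) ∈ arrowT sharpBool sharpBool := by
  refine ⟨x, b, rfl, hclosed, fun v hv => ?_⟩
  obtain ⟨w, hw, hs, hc, hcoeff⟩ :=
    exists_eval_bsubst_of_spanBool hv₁.1 hv₂.1 hv₁.2.1 hv₂.2.1 hE₁ hE₂ hv.1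
  refine ⟨w, ⟨hs, hc, normD_eq_one_iff.mpr ?_⟩, hw⟩
  rw [innerD_self_of_coeff_eq hv.1 (normD_eq_one_iff.mp hv₁.2.2) (normD_eq_one_iff.mp hv₂.2.2)
    hcoeff, horth, normD_eq_one_iff.mp hv.2.2]
  simp

theorem innerD_cross_add_conj_eq_zero (hv₁ : v₁ ∈ sharpBool) (hv₂ : v₂ ∈ sharpBool)
    (hE₁ : Eval (substD x (.inl .star) b) v₁) (hE₂ : Eval (substD x (.inr .star) b) v₂)
    (hreal : ∀ v ∈ sharpBool, Realizes sharpBool (bsubst x b v)) {v : Distr}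
    (hv : v ∈ sharpBool) :
    conj (piB v).1 * (piB v).2 * innerD v₁ v₂ +
      conj (conj (piB v).1 * (piB v).2 * innerD v₁ v₂) = 0 := by
  obtain ⟨w', hw', hEw'⟩ := hreal v hv
  obtain ⟨w, hEw, -, hc, hcoeff⟩ :=
    exists_eval_bsubst_of_spanBool hv₁.1 hv₂.1 hv₁.2.1 hv₂.2.1 hE₁ hE₂ hv.1
  have hnorm := innerD_self_of_coeff_eq hv.1 (normD_eq_one_iff.mp hv₁.2.2)
    (normD_eq_one_iff.mp hv₂.2.2)
    fun u => (hEw'.coeff_unique hEw hw'.2.1.1 hc.1 u).trans (hcoeff u)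
  rw [normD_eq_one_iff.mp hw'.2.2, normD_eq_one_iff.mp hv.2.2] at hnorm
  linear_combination -hnorm

end Abstraction

/-- Characterization of the abstractions of type ♯𝔹→♯𝔹. -/
theorem charac_sharpBool_arrow (x : ℕ) (b : Distr)
    (hclosed : fvD (Distr.single (.val (.lam x b))) = ∅) :
    Distr.single (.val (.lam x b)) ∈ arrowT sharpBool sharpBool ↔
      ∃ v₁ v₂ : Distr, v₁ ∈ sharpBool ∧ v₂ ∈ sharpBool ∧
        Eval (substD x (.inl .star) b) v₁ ∧
        Eval (substD x (.inr .star) b) v₂ ∧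
        innerD v₁ v₂ = 0 := by
  constructor
  · rintro ⟨x', b', heq, -, hreal⟩
    obtain ⟨rfl, rfl⟩ : x = x' ∧ b = b' := by simpa using heq
    obtain ⟨v₁, hv₁, hE₁⟩ := hreal ttD ttD_mem_sharpBool
    obtain ⟨v₂, hv₂, hE₂⟩ := hreal ffD ffD_mem_sharpBool
    refine ⟨v₁, v₂, hv₁, hv₂, hE₁, hE₂, eq_zero_of_forall_hinner_eq_one fun α β hαβ => ?_⟩
    simpa only [piB_boolVec] using
      innerD_cross_add_conj_eq_zero hv₁ hv₂ hE₁ hE₂ hreal (boolVec_mem_sharpBool hαβ)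
  · rintro ⟨v₁, v₂, hv₁, hv₂, hE₁, hE₂, horth⟩
    exact mem_arrowT_of_innerD_eq_zero hclosed hv₁ hv₂ hE₁ hE₂ horth

end LinAlg
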